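/- Let m ≤ n, let B be an m×n real matrix and A an n×m real matrix, and let K be the (m+n)×(m+n) block matrix with zero diagonal blocks, upper-right block B and lower-left block A, i.e. K = fromBlocks 0 B A 0. Then the characteristic polynomial of K satisfies det(X·I_{m+n} − K) = Xⁿ⁻ᵐ · det(X²·I_m − B·A), as an identity of polynomials in ℝ[X] (where B·A is regarded as an m×m matrix over ℝ[X]). -/
import Mathlib


open Matrix Polynomial

set_option synthInstance.maxHeartbeats 1000000
set_option maxHeartbeats 1000000

/-- **Characteristic polynomial of a block anti-diagonal matrix.**
For `m ≤ n`, `B` an `m × n` real matrix and `A` an `n × m` real matrix, the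
characteristic polynomial of `K = fromBlocks 0 B A 0` satisfies
`det(X·I − K) = X^(n−m) · det(X²·I_m − B·A)` in `ℝ[X]`. -/
theorem charpoly_fromBlocks_antidiagonal
    (m n : ℕ) (hmn : m ≤ n)
    (B : Matrix (Fin m) (Fin n) ℝ) (A : Matrix (Fin n) (Fin m) ℝ) :
    (Matrix.fromBlocks 0 B A 0).charpoly =
      Polynomial.X ^ (n - m) *
        (((Polynomial.X : Polynomial ℝ) ^ 2) • (1 : Matrix (Fin m) (Fin m) (Polynomial ℝ))
          - (B * A).map Polynomial.C).det := by
  apply IsFractionRing.injective (Polynomial ℝ) (RatFunc ℝ)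
  set φ : Polynomial ℝ →+* RatFunc ℝ := (algebraMap (Polynomial ℝ) (RatFunc ℝ)) with hφ
  set x : RatFunc ℝ := φ Polynomial.X with hxdef
  have hx0 : x ≠ 0 := by
    rw [hxdef, ne_eq, map_eq_zero_iff φ (IsFractionRing.injective _ _)]
    exact Polynomial.X_ne_zero
  haveI : Invertible x := invertibleOfNonzero hx0
  haveI hvinv : Invertible (fun _ : Fin n => x) :=
    ⟨fun _ => ⅟x, funext fun _ => invOf_mul_self x, funext fun _ => mul_invOf_self x⟩
  haveI : Invertible (Matrix.diagonal (fun _ : Fin n => x)) := Matrix.diagonalInvertible _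
  set B' : Matrix (Fin m) (Fin n) (RatFunc ℝ) := B.map (φ.comp Polynomial.C) with hB'
  set A' : Matrix (Fin n) (Fin m) (RatFunc ℝ) := A.map (φ.comp Polynomial.C) with hA'
  -- the mapped charmatrix
  have hcm : (charmatrix (Matrix.fromBlocks (0 : Matrix (Fin m) (Fin m) ℝ) B A 0)).map φ =
      Matrix.fromBlocks (Matrix.diagonal fun _ : Fin m => x) (-B')
        (-A') (Matrix.diagonal fun _ : Fin n => x) := by
    rw [charmatrix_fromBlocks]
    ext i j
    cases i <;> cases j <;>
      simp [charmatrix_apply, Matrix.diagonal_apply, apply_ite φ, hxdef, hB', hA',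
        Matrix.fromBlocks_apply₁₁, Matrix.fromBlocks_apply₁₂, Matrix.fromBlocks_apply₂₁,
        Matrix.fromBlocks_apply₂₂]
  rw [Matrix.charpoly, RingHom.map_det, RingHom.mapMatrix_apply, hcm, Matrix.det_fromBlocks₂₂]
  have hvi : ⅟(fun _ : Fin n => x) = fun _ : Fin n => ⅟x :=
    invOf_eq_right_inv (funext fun _ => mul_invOf_self x)
  have hinv : ⅟(Matrix.diagonal (fun _ : Fin n => x)) = Matrix.diagonal (fun _ : Fin n => ⅟x) :=
    (Matrix.invOf_diagonal_eq _).trans (by rw [hvi])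
  have hdiagm : (Matrix.diagonal (fun _ : Fin m => x)) = x • (1 : Matrix (Fin m) (Fin m) (RatFunc ℝ)) :=
    (Matrix.smul_one_eq_diagonal x).symm
  have hdiagn : (Matrix.diagonal (fun _ : Fin n => x)) = x • (1 : Matrix (Fin n) (Fin n) (RatFunc ℝ)) :=
    (Matrix.smul_one_eq_diagonal x).symm
  have hdiag' : (Matrix.diagonal (fun _ : Fin n => ⅟x)) = (⅟x) • (1 : Matrix (Fin n) (Fin n) (RatFunc ℝ)) :=
    (Matrix.smul_one_eq_diagonal _).symm
  rw [hinv, hdiagm, hdiagn, hdiag', Matrix.det_smul, Matrix.det_one, mul_one]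
  have h1 : (-B') * ((⅟x) • (1 : Matrix (Fin n) (Fin n) (RatFunc ℝ))) * (-A')
      = (⅟x) • (B' * A') := by
    rw [Matrix.mul_smul, Matrix.mul_one, Matrix.smul_mul, Matrix.neg_mul, Matrix.mul_neg, neg_neg]
  have hmid : x • (1 : Matrix (Fin m) (Fin m) (RatFunc ℝ)) - (-B') * ((⅟x) • (1 : Matrix (Fin n) (Fin n) (RatFunc ℝ))) * (-A')
      = (⅟x) • ((x ^ 2) • (1 : Matrix (Fin m) (Fin m) (RatFunc ℝ)) - B' * A') := by
    rw [h1, smul_sub, smul_smul]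
    congr 2
    rw [pow_two, ← mul_assoc, invOf_mul_self, one_mul]
  rw [hmid, Matrix.det_smul]
  -- the mapped RHS
  have hrhs : ((((Polynomial.X : Polynomial ℝ) ^ 2) • (1 : Matrix (Fin m) (Fin m) (Polynomial ℝ))
      - (B * A).map Polynomial.C).map φ)
      = (x ^ 2) • (1 : Matrix (Fin m) (Fin m) (RatFunc ℝ)) - B' * A' := by
    have : (B * A).map (φ.comp Polynomial.C) = B' * A' := by
      rw [hB', hA', ← Matrix.map_mul]
    rw [← this]
    ext i j
    simp only [Matrix.map_apply, Matrix.sub_apply, map_sub, Matrix.smul_apply, Matrix.one_apply,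
      smul_eq_mul, _root_.map_mul, map_pow, map_zero, ← hxdef]
    split_ifs <;> simp [hxdef]
  rw [_root_.map_mul, map_pow, RingHom.map_det, RingHom.mapMatrix_apply, hrhs, ← hxdef,
    invOf_eq_inv, inv_pow, pow_sub₀ x hx0 hmn]
  simp only [Fintype.card_fin]
  ring
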